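/- Let j be the isometry of the Mukai lattice of a K3 surface acting as the identity on H⁰ ⊕ H⁴ and as −id on H². Then j preserves the Mukai pairing but reverses the orientation of any positive 4-space of the form P = ⟨Re(σ), Im(σ), 1 − ω²/2, ω⟩, where σ is a period (⟨σ,σ⟩ = 0, ⟨σ,σ̄⟩ > 0, σ ∈ H² ⊗ ℂ) and ω ∈ H² ⊗ ℝ with ω² > 0. Concretely: j maps P to a positive 4-space and the determinant of the change-of-basis comparing the orientation induced by (j(Re σ), j(Im σ), j(1−ω²/2), j(ω)) with the given orientation of P', computed after orthogonal projection, is negative. -/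
import Mathlib


/-- The Mukai pairing on `H⁰ ⊕ H² ⊕ H⁴`. -/
def mukaiPairing {H2 : Type*} [AddCommGroup H2] [Module ℝ H2]
    (B : LinearMap.BilinForm ℝ H2) (u v : ℝ × H2 × ℝ) : ℝ :=
  B u.2.1 v.2.1 - u.1 * v.2.2 - v.1 * u.2.2

/-- The isometry `j = id_{H⁰⊕H⁴} ⊕ (-id_{H²})`. -/
def jInv {H2 : Type*} [AddCommGroup H2] (u : ℝ × H2 × ℝ) : ℝ × H2 × ℝ :=
  (u.1, -u.2.1, u.2.2)

/-- `j` preserves the Mukai pairing but reverses the orientation of any positive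
4-space `P = ⟨Re σ, Im σ, 1 - ω²/2, ω⟩`: `j` maps the basis of `P` into the span
of this basis, and the determinant of the change-of-basis matrix is negative. -/
theorem j_reverses_orientation
    {H2 : Type*} [AddCommGroup H2] [Module ℝ H2]
    (B : LinearMap.BilinForm ℝ H2) (hsymm : ∀ u v, B u v = B v u)
    (x y ω : H2)
    (hxy : B x x = B y y) (hxy0 : B x y = 0) (hx : 0 < B x x)
    (hω : 0 < B ω ω) (hωx : B ω x = 0) (hωy : B ω y = 0) :
    -- j is an isometry of the Mukai pairing
    (∀ u v : ℝ × H2 × ℝ, mukaiPairing B (jInv u) (jInv v) = mukaiPairing B u v) ∧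
    -- the four basis vectors of P
    (let v : Fin 4 → ℝ × H2 × ℝ :=
      ![((0 : ℝ), x, (0 : ℝ)), ((0 : ℝ), y, (0 : ℝ)),
        ((1 : ℝ), (0 : H2), -(B ω ω) / 2), ((0 : ℝ), ω, (0 : ℝ))];
    -- P is a positive 4-space
    LinearIndependent ℝ v ∧
    (∀ u ∈ Submodule.span ℝ (Set.range v), u ≠ 0 → 0 < mukaiPairing B u u) ∧
    -- j maps P to itself with negative change-of-basis determinant
    ∃ M : Matrix (Fin 4) (Fin 4) ℝ,
      (∀ i : Fin 4, jInv (v i) = ∑ k : Fin 4, M i k • v k) ∧ M.det < 0) := by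
  have hxω : B x ω = 0 := by rw [hsymm]; exact hωx
  have hyω : B y ω = 0 := by rw [hsymm]; exact hωy
  have hyx : B y x = 0 := by rw [hsymm]; exact hxy0
  refine ⟨?_, ?_, ?_, ?_⟩
  · intro u v
    simp [mukaiPairing, jInv]
  · -- linear independence
    rw [Fintype.linearIndependent_iff]
    intro g hg
    have h2 : g 2 = 0 := by
      have := congrArg Prod.fst hg
      simpa [Fin.sum_univ_four, Prod.smul_mk] using this
    have hmid : g 0 • x + g 1 • y + g 3 • ω = 0 := by
      have := congrArg (fun p => p.2.1) hg
      simp [Fin.sum_univ_four, Prod.smul_mk, h2] at this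
      linear_combination (norm := module) this
    have e0 : g 0 * B x x = 0 := by
      have := congrArg (B · x) hmid
      simpa [map_add, map_smul, hyx, hωx, mul_comm] using this
    have e1 : g 1 * B y y = 0 := by
      have := congrArg (B · y) hmid
      simpa [map_add, map_smul, hxy0, hωy, mul_comm] using this
    have e3 : g 3 * B ω ω = 0 := by
      have := congrArg (B · ω) hmid
      simpa [map_add, map_smul, hxω, hyω, mul_comm] using this
    have h0 : g 0 = 0 := by
      rcases mul_eq_zero.1 e0 with h | h
      · exact h
      · exact absurd h (ne_of_gt hx)
    have h1 : g 1 = 0 := by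
      rcases mul_eq_zero.1 e1 with h | h
      · exact h
      · exact absurd h (ne_of_gt (hxy ▸ hx))
    have h3 : g 3 = 0 := by
      rcases mul_eq_zero.1 e3 with h | h
      · exact h
      · exact absurd h (ne_of_gt hω)
    intro i
    fin_cases i <;> assumption
  · -- positivity
    intro u hu hune
    rw [Submodule.mem_span_range_iff_exists_fun ℝ] at hu
    obtain ⟨g, hg⟩ := hu
    have hu1 : u.1 = g 2 := by
      have := congrArg Prod.fst hg
      simpa [Fin.sum_univ_four, Prod.smul_mk] using this.symm
    have hu2 : u.2.1 = g 0 • x + g 1 • y + g 3 • ω := by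
      have := congrArg (fun p => p.2.1) hg
      simp [Fin.sum_univ_four, Prod.smul_mk] at this
      linear_combination (norm := module) this.symm
    have hu3 : u.2.2 = g 2 * (-(B ω ω) / 2) := by
      have := congrArg (fun p => p.2.2) hg
      simpa [Fin.sum_univ_four, Prod.smul_mk] using this.symm
    have hval : mukaiPairing B u u =
        g 0 ^ 2 * B x x + g 1 ^ 2 * B x x + (g 3 ^ 2 + g 2 ^ 2) * B ω ω := by
      simp only [mukaiPairing, hu1, hu2, hu3]
      simp [map_add, map_smul, hyx, hxy0, hωx, hωy, hxω, hyω, ← hxy]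
      ring
    rw [hval]
    have hne : ¬ (g 0 = 0 ∧ g 1 = 0 ∧ g 2 = 0 ∧ g 3 = 0) := by
      rintro ⟨a0, a1, a2, a3⟩
      apply hune
      have : u = (g 2, g 0 • x + g 1 • y + g 3 • ω, g 2 * (-(B ω ω) / 2)) := by
        ext <;> simp [hu1, hu2, hu3]
      rw [this, a0, a1, a2, a3]; simp
    have hBy := hxy ▸ hx
    rcases not_and_or.1 hne with c0 | h
    · nlinarith [sq_pos_of_ne_zero c0, mul_nonneg (sq_nonneg (g 1)) hx.le,
        mul_nonneg (sq_nonneg (g 2)) hω.le, mul_nonneg (sq_nonneg (g 3)) hω.le]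
    rcases not_and_or.1 h with c1 | h
    · nlinarith [sq_pos_of_ne_zero c1, mul_nonneg (sq_nonneg (g 0)) hx.le,
        mul_nonneg (sq_nonneg (g 2)) hω.le, mul_nonneg (sq_nonneg (g 3)) hω.le]
    rcases not_and_or.1 h with c2 | c3
    · nlinarith [sq_pos_of_ne_zero c2, mul_nonneg (sq_nonneg (g 0)) hx.le,
        mul_nonneg (sq_nonneg (g 1)) hx.le, mul_nonneg (sq_nonneg (g 3)) hω.le]
    · nlinarith [sq_pos_of_ne_zero c3, mul_nonneg (sq_nonneg (g 0)) hx.le,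
        mul_nonneg (sq_nonneg (g 1)) hx.le, mul_nonneg (sq_nonneg (g 2)) hω.le]
  · -- the matrix
    refine ⟨Matrix.diagonal ![-1, -1, 1, -1], ?_, ?_⟩
    · intro i
      fin_cases i <;>
        simp [jInv, Fin.sum_univ_four, Matrix.diagonal, Prod.smul_mk]
    · simp [Matrix.det_diagonal, Fin.prod_univ_four]
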